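/- If X, Y are independent nonnegative random variables, then E[ln(1 + X/(Y+1))] = ∫₀^∞ (L_Y(z) − L_X(z)·L_Y(z)) · e^{−z}/z dz, where L_X(z) = E[e^{−zX}] and L_Y(z) = E[e^{−zY}] are the Laplace transforms of X and Y. -/

import Mathlib

/-!
Frullani's integral gives `log (1 + x / (y + 1)) = ∫₀^∞ (e^{-(y+1)z} - e^{-(x+y+1)z}) / z dz`
for `x, y ≥ 0`. Take `x = X ω`, `y = Y ω`, integrate over `ω` and exchange the two integrals,
which Tonelli allows because the integrand is nonnegative. For fixed `z` the inner expectation is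
`e^{-z} (L_Y(z) - E[e^{-z X} e^{-z Y}]) / z`, and independence factorises the last expectation
into `L_X(z) L_Y(z)`.
-/

open MeasureTheory ProbabilityTheory Real Set Function Filter

section NonnegFubini

variable {α β : Type*} [MeasurableSpace α] [MeasurableSpace β] {μ : Measure α} {ν : Measure β}
  {f : α → β → ℝ}

lemma integral_integral_eq_toReal_lintegral_prod [SFinite ν]
    (hf : AEStronglyMeasurable (uncurry f) (μ.prod ν)) (hf0 : 0 ≤ᵐ[μ.prod ν] uncurry f)
    (hx : ∀ᵐ x ∂μ, Integrable (f x) ν) :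
    ∫ x, ∫ y, f x y ∂ν ∂μ = (∫⁻ p, ENNReal.ofReal (uncurry f p) ∂μ.prod ν).toReal := by
  have hsec : ∀ᵐ x ∂μ, ∀ᵐ y ∂ν, 0 ≤ f x y := Measure.ae_ae_of_ae_prod hf0
  calc ∫ x, ∫ y, f x y ∂ν ∂μ = (∫⁻ x, ENNReal.ofReal (∫ y, f x y ∂ν) ∂μ).toReal :=
        integral_eq_lintegral_of_nonneg_ae
          (by filter_upwards [hsec] with x hx0 using integral_nonneg_of_ae hx0)
          hf.integral_prod_right'
    _ = (∫⁻ x, ∫⁻ y, ENNReal.ofReal (f x y) ∂ν ∂μ).toReal := by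
        congr 1
        refine lintegral_congr_ae ?_
        filter_upwards [hx, hsec] with x hxi hx0
        exact ofReal_integral_eq_lintegral_ofReal hxi hx0
    _ = (∫⁻ p, ENNReal.ofReal (uncurry f p) ∂μ.prod ν).toReal := by
        rw [lintegral_prod _ hf.aemeasurable.ennreal_ofReal]
        rfl

/-- Unlike `integral_integral_swap`, this needs no integrability on the product: when the
Tonelli integral is infinite, both sides are `0`. -/
theorem integral_integral_swap_of_nonneg [SFinite μ] [SFinite ν]
    (hf : AEStronglyMeasurable (uncurry f) (μ.prod ν)) (hf0 : 0 ≤ᵐ[μ.prod ν] uncurry f)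
    (hx : ∀ᵐ x ∂μ, Integrable (f x) ν) (hy : ∀ᵐ y ∂ν, Integrable (fun x => f x y) μ) :
    ∫ x, ∫ y, f x y ∂ν ∂μ = ∫ y, ∫ x, f x y ∂μ ∂ν := by
  rw [integral_integral_eq_toReal_lintegral_prod hf hf0 hx,
    integral_integral_eq_toReal_lintegral_prod (f := fun y x => f x y) hf.prod_swap
      (Measure.measurePreserving_swap.quasiMeasurePreserving.ae hf0) hy]
  exact congrArg ENNReal.toReal (lintegral_prod_swap _).symm

end NonnegFubini

section Frullani

variable {a b : ℝ}

lemma integrableOn_Ioi_exp_neg_mul_sub_div (ha : 0 < a) (hb : 0 < b) :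
    IntegrableOn (fun z => (exp (-a * z) - exp (-b * z)) / z) (Ioi 0) := by
  wlog hab : a ≤ b generalizing a b
  · exact (this hb ha (le_of_not_ge hab)).neg.congr_fun
      (fun z _ => by simp only [Pi.neg_apply]; ring) measurableSet_Ioi
  refine Integrable.mono' ((exp_neg_integrableOn_Ioi 0 ha).const_mul (b - a))
    (by fun_prop : Measurable _).aestronglyMeasurable ?_
  filter_upwards [ae_restrict_mem measurableSet_Ioi] with z (hz : 0 < z)
  -- `0 ≤ e^{-az} - e^{-bz} = e^{-az} (1 - e^{-(b-a)z}) ≤ e^{-az} (b - a) z`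
  have hfactor : exp (-b * z) = exp (-a * z) * exp (-((b - a) * z)) := by
    rw [← exp_add]; ring_nf
  have hle_one : exp (-((b - a) * z)) ≤ 1 := exp_le_one_iff.2 (by nlinarith)
  have hlin := add_one_le_exp (-((b - a) * z))
  have hpos := exp_pos (-a * z)
  rw [Real.norm_eq_abs, abs_of_nonneg (div_nonneg (by nlinarith) hz.le), div_le_iff₀ hz,
    hfactor]
  nlinarith

lemma integral_Ioi_exp_neg_mul_sub_div (ha : 0 < a) (hb : 0 < b) :
    ∫ z in Ioi 0, (exp (-a * z) - exp (-b * z)) / z = log (b / a) := by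
  have hcont : Continuous fun x : ℝ => exp (-x) := by fun_prop
  have h := Frullani.integral_Ioi_eq (L := 1) (R := 0)
    (hcont.locallyIntegrable.locallyIntegrableOn _) ha hb
    (hcont.tendsto' 0 1 (by simp) |>.mono_left nhdsWithin_le_nhds)
    tendsto_exp_neg_atTop_nhds_zero
    ((integrableOn_Ioi_exp_neg_mul_sub_div ha hb).congr_fun
      (fun z _ => by simp [div_eq_inv_mul]) measurableSet_Ioi)
  simpa [div_eq_inv_mul] using h

end Frullani

noncomputable def hamdiKernel (x y z : ℝ) : ℝ :=
  (exp (-z * y) - exp (-z * x) * exp (-z * y)) * exp (-z) / z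

lemma hamdiKernel_eq (x y z : ℝ) :
    hamdiKernel x y z = (exp (-(y + 1) * z) - exp (-(x + y + 1) * z)) / z := by
  rw [hamdiKernel, show -(y + 1) * z = -z * y + -z by ring,
    show -(x + y + 1) * z = -z * x + -z * y + -z by ring, exp_add, exp_add, exp_add]
  ring

section HamdiKernel

variable {x y : ℝ}

lemma hamdiKernel_nonneg {z : ℝ} (hx : 0 ≤ x) (hz : 0 ≤ z) : 0 ≤ hamdiKernel x y z := by
  have hX : exp (-z * x) ≤ 1 := exp_le_one_iff.2 (by nlinarith)
  have hY := exp_pos (-z * y)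
  exact div_nonneg (mul_nonneg (by nlinarith) (exp_pos _).le) hz

lemma integrableOn_hamdiKernel (hx : 0 ≤ x) (hy : 0 ≤ y) :
    IntegrableOn (hamdiKernel x y) (Ioi 0) := by
  rw [funext (hamdiKernel_eq x y)]
  exact integrableOn_Ioi_exp_neg_mul_sub_div (by positivity) (by positivity)

lemma integral_hamdiKernel (hx : 0 ≤ x) (hy : 0 ≤ y) :
    ∫ z in Ioi 0, hamdiKernel x y z = log (1 + x / (y + 1)) := by
  simp only [hamdiKernel_eq]
  rw [integral_Ioi_exp_neg_mul_sub_div (by positivity) (by positivity)]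
  congr 1
  field_simp
  ring

end HamdiKernel

section Laplace

variable {Ω : Type*} [MeasurableSpace Ω] {μ : Measure Ω} [IsFiniteMeasure μ] {X Y : Ω → ℝ}
  {z : ℝ}

lemma integrable_exp_neg_mul_of_nonneg (hX : AEMeasurable X μ) (hX0 : ∀ᵐ ω ∂μ, 0 ≤ X ω)
    (hz : 0 ≤ z) : Integrable (fun ω => exp (-z * X ω)) μ := by
  simpa using integrable_exp_mul_of_le z 0 hz hX.neg
    (by filter_upwards [hX0] with ω h; simpa using h)

lemma ProbabilityTheory.IndepFun.integrable_exp_neg_mul_mul (hXY : IndepFun X Y μ) (hX : AEMeasurable X μ)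
    (hY : AEMeasurable Y μ) (hX0 : ∀ᵐ ω ∂μ, 0 ≤ X ω) (hY0 : ∀ᵐ ω ∂μ, 0 ≤ Y ω) (hz : 0 ≤ z) :
    Integrable (fun ω => exp (-z * X ω) * exp (-z * Y ω)) μ :=
  (hXY.exp_mul (-z) (-z)).integrable_mul (integrable_exp_neg_mul_of_nonneg hX hX0 hz)
    (integrable_exp_neg_mul_of_nonneg hY hY0 hz)

lemma ProbabilityTheory.IndepFun.integrable_hamdiKernel (hXY : IndepFun X Y μ) (hX : AEMeasurable X μ)
    (hY : AEMeasurable Y μ) (hX0 : ∀ᵐ ω ∂μ, 0 ≤ X ω) (hY0 : ∀ᵐ ω ∂μ, 0 ≤ Y ω) (hz : 0 ≤ z) :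
    Integrable (fun ω => hamdiKernel (X ω) (Y ω) z) μ :=
  (((integrable_exp_neg_mul_of_nonneg hY hY0 hz).sub
    (hXY.integrable_exp_neg_mul_mul hX hY hX0 hY0 hz)).mul_const _).div_const _

lemma ProbabilityTheory.IndepFun.integral_hamdiKernel (hXY : IndepFun X Y μ) (hX : AEMeasurable X μ)
    (hY : AEMeasurable Y μ) (hX0 : ∀ᵐ ω ∂μ, 0 ≤ X ω) (hY0 : ∀ᵐ ω ∂μ, 0 ≤ Y ω) (hz : 0 ≤ z) :
    ∫ ω, hamdiKernel (X ω) (Y ω) z ∂μ =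
      ((∫ ω, exp (-z * Y ω) ∂μ) - (∫ ω, exp (-z * X ω) ∂μ) * (∫ ω, exp (-z * Y ω) ∂μ))
        * exp (-z) / z := by
  have iX := integrable_exp_neg_mul_of_nonneg hX hX0 hz
  have iY := integrable_exp_neg_mul_of_nonneg hY hY0 hz
  simp only [hamdiKernel]
  rw [integral_div, integral_mul_const,
    integral_sub iY (hXY.integrable_exp_neg_mul_mul hX hY hX0 hY0 hz),
    (hXY.exp_mul (-z) (-z)).integral_fun_mul_eq_mul_integral iX.1 iY.1]

end Laplace

theorem hamdi_lemma_general {Ω : Type*} [MeasureSpace Ω] {μ : Measure Ω} [IsProbabilityMeasure μ]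
    (X Y : Ω → ℝ) (hX : Measurable X) (hY : Measurable Y)
    (hXpos : ∀ ω, 0 ≤ X ω) (hYpos : ∀ ω, 0 ≤ Y ω)
    (hindep : IndepFun X Y μ) :
    (∫ ω, Real.log (1 + X ω / (Y ω + 1)) ∂μ)
      = ∫ z in Set.Ioi (0:ℝ),
          ((∫ ω, Real.exp (-z * Y ω) ∂μ)
            - (∫ ω, Real.exp (-z * X ω) ∂μ) * (∫ ω, Real.exp (-z * Y ω) ∂μ))
            * Real.exp (-z) / z := by
  have hz0 : ∀ᵐ z ∂(volume.restrict (Ioi (0 : ℝ))), 0 < z := ae_restrict_mem measurableSet_Ioi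
  have hX0 : ∀ᵐ ω ∂μ, 0 ≤ X ω := ae_of_all _ hXpos
  have hY0 : ∀ᵐ ω ∂μ, 0 ≤ Y ω := ae_of_all _ hYpos
  calc ∫ ω, log (1 + X ω / (Y ω + 1)) ∂μ
      = ∫ ω, (∫ z in Ioi 0, hamdiKernel (X ω) (Y ω) z) ∂μ :=
        integral_congr_ae (ae_of_all _ fun ω => (integral_hamdiKernel (hXpos ω) (hYpos ω)).symm)
    _ = ∫ z in Ioi 0, ∫ ω, hamdiKernel (X ω) (Y ω) z ∂μ := by
        refine integral_integral_swap_of_nonneg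
          (Measurable.aestronglyMeasurable (by unfold hamdiKernel; fun_prop)) ?_
          (ae_of_all _ fun ω => integrableOn_hamdiKernel (hXpos ω) (hYpos ω)) ?_
        · filter_upwards [Measure.quasiMeasurePreserving_snd.ae hz0] with p hp
          exact hamdiKernel_nonneg (hXpos p.1) hp.le
        · filter_upwards [hz0] with z hz
          exact hindep.integrable_hamdiKernel hX.aemeasurable hY.aemeasurable hX0 hY0 hz.le
    _ = _ := setIntegral_congr_fun measurableSet_Ioi fun z hz =>
        hindep.integral_hamdiKernel hX.aemeasurable hY.aemeasurable hX0 hY0 (le_of_lt hz)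

/-- **Hamdi's lemma.** For independent nonnegative random variables `X` and `Y`,
`E[ln(1 + X/(Y+1))] = ∫₀^∞ (L_Y(z) − L_X(z) L_Y(z)) e^{−z}/z dz`, where
`L_X(z) = E[e^{−zX}]` and `L_Y(z) = E[e^{−zY}]`. -/
theorem hamdi_lemma {Ω : Type*} [MeasureSpace Ω] {μ : Measure Ω} [IsProbabilityMeasure μ]
    (X Y : Ω → ℝ) (hX : Measurable X) (hY : Measurable Y)
    (hXpos : ∀ ω, 0 ≤ X ω) (hYpos : ∀ ω, 0 ≤ Y ω)
    (hindep : IndepFun X Y μ)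
    (hint : Integrable (fun ω => Real.log (1 + X ω / (Y ω + 1))) μ) :
    (∫ ω, Real.log (1 + X ω / (Y ω + 1)) ∂μ)
      = ∫ z in Set.Ioi (0:ℝ),
          ((∫ ω, Real.exp (-z * Y ω) ∂μ)
            - (∫ ω, Real.exp (-z * X ω) ∂μ) * (∫ ω, Real.exp (-z * Y ω) ∂μ))
            * Real.exp (-z) / z :=
  hamdi_lemma_general X Y hX hY hXpos hYpos hindep
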